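/- Let E be a compact connected subset of the open unit disk B² = {z ∈ ℂ : |z| < 1} containing at least two points. Then the elliptic capacity of E does not exceed its hyperbolic capacity: cap_e(E) ≤ cap_h(E), where cap_h(E) = lim_{n→∞} d_n(E) and cap_e(E) = lim_{n→∞} e_n(E) (both limits exist since the sequences of diameters are nonincreasing). -/

import Mathlib

open Filter Topology

/-- The product `∏_{k<j} |z_k−z_j|/|1−z_k·conj(z_j)|` over an `n`-tuple of points. -/
noncomputable def hypProd (n : ℕ) (z : Fin n → ℂ) : ℝ :=
  ∏ p ∈ Finset.univ.filter (fun p : Fin n × Fin n => p.1 < p.2),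
    ‖z p.1 - z p.2‖ / ‖1 - z p.1 * (starRingEnd ℂ) (z p.2)‖

/-- The `n`-th hyperbolic diameter of `E`. -/
noncomputable def hypDiam (E : Set ℂ) (n : ℕ) : ℝ :=
  sSup {x : ℝ | ∃ z : Fin n → ℂ, (∀ i, z i ∈ E) ∧ hypProd n z = x}
    ^ ((2 : ℝ) / ((n : ℝ) * ((n : ℝ) - 1)))

/-- The product `∏_{k<j} |z_k−z_j|/|1+z_k·conj(z_j)|` over an `n`-tuple of points. -/
noncomputable def ellProd (n : ℕ) (z : Fin n → ℂ) : ℝ :=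
  ∏ p ∈ Finset.univ.filter (fun p : Fin n × Fin n => p.1 < p.2),
    ‖z p.1 - z p.2‖ / ‖1 + z p.1 * (starRingEnd ℂ) (z p.2)‖

/-- The `n`-th elliptic diameter of `E`. -/
noncomputable def ellDiam (E : Set ℂ) (n : ℕ) : ℝ :=
  sSup {x : ℝ | ∃ z : Fin n → ℂ, (∀ i, z i ∈ E) ∧ ellProd n z = x}
    ^ ((2 : ℝ) / ((n : ℝ) * ((n : ℝ) - 1)))

open ComplexConjugate

/-!
The kernel `log |1 + z w̄| - log |1 - z w̄| = 2 Re artanh (z w̄)` expands on the disk as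
`Σ_{m odd} (2/m) Re (z^m w̄^m)`, so it is positive semidefinite: its double sum over a finite
family is `Σ_{m odd} (2/m) |Σ_i z_i^m|² ≥ 0`. Splitting that double sum into the pairs `k < j`
(counted twice) and the diagonal, the elliptic product of `n` points of `E ⊆ {|z| ≤ R}` exceeds
the hyperbolic one by at most `D^n` with `D = (1 + R²)/(1 - R²)`, a bound for the diagonal
terms. Hence `e_n ≤ D^{2/(n-1)} d_n`, and `D^{2/(n-1)} → 1`.
-/

theorem sum_sum_eq_two_nsmul_sum_lt_add_sum_diag {ι M : Type*} [Fintype ι] [LinearOrder ι]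
    [AddCommMonoid M] (g : ι → ι → M) (hg : ∀ i j, g i j = g j i) :
    ∑ i, ∑ j, g i j = 2 • ∑ p : ι × ι with p.1 < p.2, g p.1 p.2 + ∑ i, g i i := by
  have htri : ∀ i j, g i j = (if i < j then g i j else 0) + (if j < i then g j i else 0)
      + (if i = j then g i j else 0) := by
    intro i j
    rcases lt_trichotomy i j with h | rfl | h
    · simp [h, h.not_gt, h.ne]
    · simp
    · simp [h, h.not_gt, h.ne', hg i j]
  rw [Finset.sum_filter, Fintype.sum_prod_type]
  simp only
  conv_lhs => enter [2, i, 2, j]; rw [htri i j]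
  simp only [Finset.sum_add_distrib]
  rw [Finset.sum_comm (f := fun i j => if j < i then g j i else 0)]
  simp [two_nsmul]

theorem sSup_image_le_mul_sSup_image {α : Type*} {s : Set α} {f g : α → ℝ} {c : ℝ}
    (hc : 0 ≤ c) (hg : ∀ a ∈ s, 0 ≤ g a) (hgb : BddAbove (g '' s))
    (hfg : ∀ a ∈ s, f a ≤ c * g a) :
    sSup (f '' s) ≤ c * sSup (g '' s) := by
  refine Real.sSup_le ?_ (mul_nonneg hc (Real.sSup_nonneg ?_))
  · rintro _ ⟨a, ha, rfl⟩
    exact (hfg a ha).trans (mul_le_mul_of_nonneg_left (le_csSup hgb ⟨a, ha, rfl⟩) hc)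
  · rintro _ ⟨a, ha, rfl⟩
    exact hg a ha

theorem sum_sum_mul_conj_eq_normSq {ι : Type*} [Fintype ι] (a : ι → ℂ) :
    ∑ i, ∑ j, a i * conj (a j) = (Complex.normSq (∑ i, a i) : ℂ) := by
  rw [← Complex.mul_conj, map_sum, Finset.sum_mul_sum]

theorem re_pow_sub_neg_pow_div (u : ℂ) (m : ℕ) :
    ((u ^ m - (-u) ^ m) / m).re = (1 - (-1) ^ m) / m * (u ^ m).re := by
  have : (u ^ m - (-u) ^ m) / m = (((1 - (-1) ^ m) / m : ℝ) : ℂ) * u ^ m := by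
    push_cast
    rw [neg_pow]
    ring
  rw [this, Complex.re_ofReal_mul]

theorem norm_one_sub_pos {u : ℂ} (hu : ‖u‖ < 1) : 0 < ‖1 - u‖ := by
  linarith [norm_sub_norm_le (1 : ℂ) u, norm_one (α := ℂ)]

theorem norm_one_add_pos {u : ℂ} (hu : ‖u‖ < 1) : 0 < ‖1 + u‖ := by
  simpa using norm_one_sub_pos (u := -u) (by rwa [norm_neg])

theorem norm_mul_conj_lt_one {z w : ℂ} (hz : ‖z‖ < 1) (hw : ‖w‖ < 1) : ‖z * conj w‖ < 1 := by
  rw [norm_mul, Complex.norm_conj]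
  exact mul_lt_one_of_nonneg_of_lt_one_left (norm_nonneg _) hz hw.le

theorem norm_sub_le_norm_one_sub_mul_conj {z w : ℂ} (hz : ‖z‖ ≤ 1) (hw : ‖w‖ ≤ 1) :
    ‖z - w‖ ≤ ‖1 - z * conj w‖ := by
  have hz2 : Complex.normSq z ≤ 1 := by
    rw [Complex.normSq_eq_norm_sq]; nlinarith [norm_nonneg z]
  have hw2 : Complex.normSq w ≤ 1 := by
    rw [Complex.normSq_eq_norm_sq]; nlinarith [norm_nonneg w]
  have expand : Complex.normSq (1 - z * conj w) - Complex.normSq (z - w)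
      = (1 - Complex.normSq z) * (1 - Complex.normSq w) := by
    simp only [Complex.normSq_apply, Complex.sub_re, Complex.sub_im, Complex.mul_re,
      Complex.mul_im, Complex.one_re, Complex.one_im, Complex.conj_re, Complex.conj_im]
    ring
  rw [Complex.norm_def, Complex.norm_def]
  exact Real.sqrt_le_sqrt (by nlinarith)

noncomputable def logNormRatio (u : ℂ) : ℝ := Real.log ‖1 + u‖ - Real.log ‖1 - u‖

theorem hasSum_logNormRatio {u : ℂ} (hu : ‖u‖ < 1) :
    HasSum (fun m : ℕ => ((u ^ m - (-u) ^ m) / m).re) (logNormRatio u) := by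
  have hsub := Complex.hasSum_taylorSeries_neg_log hu
  have hadd := Complex.hasSum_taylorSeries_neg_log (z := -u) (by rwa [norm_neg])
  rw [sub_neg_eq_add] at hadd
  have := Complex.hasSum_re (hsub.sub hadd)
  simp only [sub_div] at this ⊢
  convert this using 1
  simp only [logNormRatio, Complex.sub_re, Complex.neg_re, Complex.log_re]
  ring

theorem logNormRatio_conj (u : ℂ) : logNormRatio (conj u) = logNormRatio u := by
  have hadd : 1 + conj u = conj (1 + u) := by simp
  have hsub : 1 - conj u = conj (1 - u) := by simp
  rw [logNormRatio, logNormRatio, hadd, hsub, Complex.norm_conj, Complex.norm_conj]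

theorem exp_neg_logNormRatio {u : ℂ} (hu : ‖u‖ < 1) :
    Real.exp (-logNormRatio u) = ‖1 - u‖ / ‖1 + u‖ := by
  rw [logNormRatio, neg_sub, Real.exp_sub, Real.exp_log (norm_one_sub_pos hu),
    Real.exp_log (norm_one_add_pos hu)]

theorem logNormRatio_mul_conj_self_le {z : ℂ} {R : ℝ} (hz : ‖z‖ ≤ R) (hR : R < 1) :
    logNormRatio (z * conj z) ≤ Real.log ((1 + R ^ 2) / (1 - R ^ 2)) := by
  have hz2 : ‖z‖ ^ 2 ≤ R ^ 2 := pow_le_pow_left₀ (norm_nonneg z) hz 2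
  have hR2 : R ^ 2 < 1 := by nlinarith [norm_nonneg z]
  have hplus : (1 : ℂ) + (‖z‖ : ℂ) ^ 2 = ((1 + ‖z‖ ^ 2 : ℝ) : ℂ) := by push_cast; ring
  have hminus : (1 : ℂ) - (‖z‖ : ℂ) ^ 2 = ((1 - ‖z‖ ^ 2 : ℝ) : ℂ) := by push_cast; ring
  rw [logNormRatio, Complex.mul_conj', hplus, hminus, Complex.norm_of_nonneg (by positivity),
    Complex.norm_of_nonneg (by linarith), ← Real.log_div (by positivity) (by linarith)]
  apply Real.log_le_log (div_pos (by positivity) (by linarith))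
  gcongr

theorem sum_sum_logNormRatio_mul_conj_nonneg {ι : Type*} [Fintype ι] (z : ι → ℂ)
    (hz : ∀ i, ‖z i‖ < 1) :
    0 ≤ ∑ i, ∑ j, logNormRatio (z i * conj (z j)) := by
  have hu : ∀ i j, ‖z i * conj (z j)‖ < 1 := fun i j => norm_mul_conj_lt_one (hz i) (hz j)
  refine HasSum.nonneg (fun m => ?_)
    (hasSum_sum fun i _ => hasSum_sum fun j _ => hasSum_logNormRatio (hu i j))
  have hcoeff : 0 ≤ (1 - (-1) ^ m) / (m : ℝ) := by
    have : (-1 : ℝ) ^ m ≤ 1 := (le_abs_self _).trans (abs_neg_one_pow m).le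
    exact div_nonneg (by linarith) m.cast_nonneg
  calc 0 ≤ (1 - (-1) ^ m) / (m : ℝ) * Complex.normSq (∑ i, z i ^ m) :=
        mul_nonneg hcoeff (Complex.normSq_nonneg _)
    _ = (1 - (-1) ^ m) / (m : ℝ) * (∑ i, ∑ j, z i ^ m * conj (z j ^ m)).re := by
      rw [sum_sum_mul_conj_eq_normSq, Complex.ofReal_re]
    _ = _ := by
      simp only [re_pow_sub_neg_pow_div, ← mul_pow, map_pow, Complex.re_sum, Finset.mul_sum]

theorem hypProd_nonneg {n : ℕ} (z : Fin n → ℂ) : 0 ≤ hypProd n z :=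
  Finset.prod_nonneg fun _ _ => div_nonneg (norm_nonneg _) (norm_nonneg _)

theorem ellProd_nonneg {n : ℕ} (z : Fin n → ℂ) : 0 ≤ ellProd n z :=
  Finset.prod_nonneg fun _ _ => div_nonneg (norm_nonneg _) (norm_nonneg _)

theorem hypProd_le_one {n : ℕ} (z : Fin n → ℂ) (hz : ∀ i, ‖z i‖ ≤ 1) : hypProd n z ≤ 1 :=
  Finset.prod_le_one (fun _ _ => div_nonneg (norm_nonneg _) (norm_nonneg _)) fun p _ =>
    div_le_one_of_le₀ (norm_sub_le_norm_one_sub_mul_conj (hz p.1) (hz p.2)) (norm_nonneg _)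

theorem ellProd_eq_hypProd_mul_exp {n : ℕ} (z : Fin n → ℂ) (hz : ∀ i, ‖z i‖ < 1) :
    ellProd n z = hypProd n z *
      Real.exp (-∑ p : Fin n × Fin n with p.1 < p.2, logNormRatio (z p.1 * conj (z p.2))) := by
  have hu : ∀ i j, ‖z i * conj (z j)‖ < 1 := fun i j => norm_mul_conj_lt_one (hz i) (hz j)
  rw [ellProd, hypProd, ← Finset.sum_neg_distrib, Real.exp_sum, ← Finset.prod_mul_distrib]
  refine Finset.prod_congr rfl fun p _ => ?_
  rw [exp_neg_logNormRatio (hu _ _), div_mul_div_cancel₀ (norm_one_sub_pos (hu _ _)).ne']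

theorem ellProd_le_pow_mul_hypProd {n : ℕ} (z : Fin n → ℂ) {R : ℝ} (hR0 : 0 ≤ R) (hR1 : R < 1)
    (hz : ∀ i, ‖z i‖ ≤ R) :
    ellProd n z ≤ ((1 + R ^ 2) / (1 - R ^ 2)) ^ n * hypProd n z := by
  set D := (1 + R ^ 2) / (1 - R ^ 2)
  have hD : 1 ≤ D := by
    rw [le_div_iff₀ (by nlinarith)]
    nlinarith
  have hz1 : ∀ i, ‖z i‖ < 1 := fun i => (hz i).trans_lt hR1
  set S := ∑ p : Fin n × Fin n with p.1 < p.2, logNormRatio (z p.1 * conj (z p.2))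
  have hdiag : ∑ i, logNormRatio (z i * conj (z i)) ≤ n * Real.log D := by
    simpa using Finset.sum_le_sum (s := Finset.univ) fun i _ =>
      logNormRatio_mul_conj_self_le (hz i) hR1
  have hsplit := sum_sum_eq_two_nsmul_sum_lt_add_sum_diag
    (fun i j => logNormRatio (z i * conj (z j))) fun i j => by
      rw [← logNormRatio_conj, map_mul, Complex.conj_conj, mul_comm]
  have hS : -S ≤ n * Real.log D := by
    have := sum_sum_logNormRatio_mul_conj_nonneg z hz1
    have := mul_nonneg n.cast_nonneg (Real.log_nonneg hD)
    simp only [two_nsmul] at hsplit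
    linarith
  calc ellProd n z = hypProd n z * Real.exp (-S) := ellProd_eq_hypProd_mul_exp z hz1
    _ ≤ hypProd n z * Real.exp (n * Real.log D) := by
      gcongr
      exact hypProd_nonneg z
    _ = D ^ n * hypProd n z := by
      rw [Real.exp_nat_mul, Real.exp_log (by linarith), mul_comm]

theorem ellDiam_le_rpow_mul_hypDiam {E : Set ℂ} {R : ℝ} (hR0 : 0 ≤ R) (hR1 : R < 1)
    (hE : ∀ z ∈ E, ‖z‖ ≤ R) {n : ℕ} (hn : 2 ≤ n) :
    ellDiam E n ≤ ((1 + R ^ 2) / (1 - R ^ 2)) ^ ((2 : ℝ) / (n - 1)) * hypDiam E n := by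
  set D := (1 + R ^ 2) / (1 - R ^ 2)
  have hD : 0 < D := div_pos (by positivity) (by nlinarith)
  have hn' : (2 : ℝ) ≤ n := by exact_mod_cast hn
  set s := {z : Fin n → ℂ | ∀ i, z i ∈ E}
  have hhyp : 0 ≤ sSup (hypProd n '' s) :=
    Real.sSup_nonneg (Set.forall_mem_image.mpr fun z _ => hypProd_nonneg z)
  have hsup : sSup (ellProd n '' s) ≤ D ^ n * sSup (hypProd n '' s) :=
    sSup_image_le_mul_sSup_image (pow_nonneg hD.le n) (fun z _ => hypProd_nonneg z)
      ⟨1, Set.forall_mem_image.mpr fun z hz => hypProd_le_one z fun i => (hE _ (hz i)).trans hR1.le⟩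
      fun z hz => ellProd_le_pow_mul_hypProd z hR0 hR1 fun i => hE _ (hz i)
  calc ellDiam E n = sSup (ellProd n '' s) ^ ((2 : ℝ) / (n * (n - 1))) := rfl
    _ ≤ (D ^ n * sSup (hypProd n '' s)) ^ ((2 : ℝ) / (n * (n - 1))) :=
      Real.rpow_le_rpow (Real.sSup_nonneg (Set.forall_mem_image.mpr fun z _ => ellProd_nonneg z))
        hsup (div_nonneg zero_le_two (mul_nonneg (by linarith) (by linarith)))
    _ = D ^ ((2 : ℝ) / (n - 1)) * hypDiam E n := by
      rw [Real.mul_rpow (by positivity) hhyp, ← Real.rpow_natCast, ← Real.rpow_mul hD.le]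
      congr 2
      field_simp

theorem elliptic_capacity_le_hyperbolic_capacity_general
    (E : Set ℂ) (hE : IsCompact E)
    (hE1 : E ⊆ Metric.ball (0 : ℂ) 1) :
    ∀ Lh Le : ℝ, Tendsto (fun n : ℕ => hypDiam E n) atTop (𝓝 Lh) →
      Tendsto (fun n : ℕ => ellDiam E n) atTop (𝓝 Le) → Le ≤ Lh := by
  intro Lh Le hLh hLe
  obtain ⟨R, ⟨hR0, hR1⟩, hER⟩ := exists_pos_lt_subset_ball one_pos hE.isClosed hE1
  have hE_R : ∀ z ∈ E, ‖z‖ ≤ R := fun z hz => (mem_ball_zero_iff.mp (hER hz)).le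
  have hD : 0 < (1 + R ^ 2) / (1 - R ^ 2) := div_pos (by positivity) (by nlinarith)
  have hexp : Tendsto (fun n : ℕ => (2 : ℝ) / (n - 1)) atTop (𝓝 0) :=
    tendsto_const_nhds.div_atTop (tendsto_atTop_add_const_right _ _ tendsto_natCast_atTop_atTop)
  have hbound : Tendsto (fun n : ℕ => ((1 + R ^ 2) / (1 - R ^ 2)) ^ ((2 : ℝ) / (n - 1)) *
      hypDiam E n) atTop (𝓝 Lh) := by
    simpa using ((Real.continuousAt_const_rpow hD.ne').tendsto.comp hexp).mul hLh
  exact le_of_tendsto_of_tendsto hLe hbound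
    (eventually_atTop.mpr ⟨2, fun n hn => ellDiam_le_rpow_mul_hypDiam hR0.le hR1 hE_R hn⟩)

/-- Duren–Kühnau: for a compact connected `E ⊂ B²` with at least two points, the elliptic
capacity does not exceed the hyperbolic capacity: `cap_e(E) ≤ cap_h(E)`. -/
theorem elliptic_capacity_le_hyperbolic_capacity
    (E : Set ℂ) (hE : IsCompact E) (hconn : IsConnected E)
    (hE1 : E ⊆ Metric.ball (0 : ℂ) 1)
    (h2 : ∃ a ∈ E, ∃ b ∈ E, a ≠ b) :
    ∀ Lh Le : ℝ, Tendsto (fun n : ℕ => hypDiam E n) atTop (𝓝 Lh) →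
      Tendsto (fun n : ℕ => ellDiam E n) atTop (𝓝 Le) → Le ≤ Lh :=
  elliptic_capacity_le_hyperbolic_capacity_general E hE hE1
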